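/- Let a_0,...,a_{2^h−1} ∈ {0,1} be an assignment to the monotone sub-balancing formula of height h. If for some 0 < k ≤ h and some 0 ≤ i < 2^{h−k} the number of 1-values among a_{i·2^k},...,a_{(i+1)·2^k−1} is strictly greater than 2^{k−1} and strictly less than 2^k, then the root evaluates to F_1 and the assignment is not accepted. -/

import Mathlib

/-- The 4-letter alphabet `Σ = {0, 1, P, F}` of the balancing formula. -/
inductive Sig4 where
  | zero | one | P | F
deriving DecidableEq

/-- The balancing gate. -/
def bgate : Sig4 → Sig4 → Sig4
  | .zero, .zero => .zero
  | .one, .one => .one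
  | .one, .zero => .P
  | .zero, .one => .P
  | .P, .P => .P
  | _, _ => .F

/-- The value computed at the root of the balancing formula of height `h`
on the Boolean input `a` (read at positions `0, …, 2^h - 1`). -/
def balEval : ℕ → (ℕ → Bool) → Sig4
  | 0, a => if a 0 then .one else .zero
  | h + 1, a => bgate (balEval h a) (balEval h (fun i => a (i + 2 ^ h)))

/-- The number of `1`-values among the first `m` positions of `a`. -/
def ones (m : ℕ) (a : ℕ → Bool) : ℕ :=
  ((Finset.range m).filter (fun j => a j = true)).card
/-- The 5-letter alphabet `Σ = {0, F₀, P, F₁, 1}` (in increasing order). -/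
inductive Sig5 where
  | zero | F0 | P | F1 | one
deriving DecidableEq

/-- The position of a letter in the order `0 < F₀ < P < F₁ < 1`. -/
def Sig5.ord : Sig5 → Fin 5
  | .zero => 0
  | .F0 => 1
  | .P => 2
  | .F1 => 3
  | .one => 4

/-- The monotone balancing gate. -/
def mgate : Sig5 → Sig5 → Sig5
  | .zero, .zero => .zero
  | .one, .one => .one
  | .one, .zero => .P
  | .zero, .one => .P
  | .P, .P => .P
  | .zero, .P => .F0
  | .P, .zero => .F0
  | .one, .P => .F1
  | .P, .one => .F1
  | .P, .F0 => .F0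
  | .F0, .P => .F0
  | .F0, .zero => .F0
  | .zero, .F0 => .F0
  | .F0, .F0 => .F0
  | .F0, .one => .F1
  | .one, .F0 => .F1
  | _, _ => .F1

/-- Identification of `F₀` and `F₁` with the letter `F` of the 4-valued
alphabet. -/
def collapse : Sig5 → Sig4
  | .zero => .zero
  | .one => .one
  | .P => .P
  | .F0 => .F
  | .F1 => .F

/-- The value at the root of the monotone (sub-)balancing formula of height `h`
on Boolean input `a`. -/
def monEval : ℕ → (ℕ → Bool) → Sig5
  | 0, a => if a 0 then .one else .zero
  | h + 1, a => mgate (monEval h a) (monEval h (fun i => a (i + 2 ^ h)))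

/-!
A block of `2^h` inputs containing `c` ones evaluates to `0` iff `c = 0`, to `1` iff `c = 2^h`,
and to `F₁` or `1` as soon as `2^h < 2c`. The last clause is preserved by a gate: if the two
halves together hold more than half of the ones, one half is itself more than half full, so it
evaluates to `F₁` or `1`, while the other half is nonempty, and the gate sends such a pair to `F₁`
or `1`. Hence a block that is more than half but not completely full evaluates to `F₁`, and since
`F₁` is absorbing this value reaches the root.
-/

lemma ones_eq_sum (m : ℕ) (a : ℕ → Bool) :
    ones m a = ∑ j ∈ Finset.range m, if a j then 1 else 0 := by
  rw [ones, Finset.card_filter]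

lemma ones_add (m n : ℕ) (a : ℕ → Bool) :
    ones (m + n) a = ones m a + ones n (fun j => a (j + m)) := by
  rw [ones_eq_sum, ones_eq_sum, ones_eq_sum, Finset.sum_range_add]
  simp_rw [Nat.add_comm m]

lemma ones_one (a : ℕ → Bool) : ones 1 a = if a 0 then 1 else 0 := by
  rw [ones_eq_sum, Finset.sum_range_one]

namespace Sig5

lemma mgate_comm (x y : Sig5) : mgate x y = mgate y x := by
  cases x <;> cases y <;> rfl

lemma mgate_eq_zero_iff {x y : Sig5} : mgate x y = zero ↔ x = zero ∧ y = zero := by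
  cases x <;> cases y <;> decide

lemma mgate_eq_one_iff {x y : Sig5} : mgate x y = one ↔ x = one ∧ y = one := by
  cases x <;> cases y <;> decide

lemma mgate_F1_left (x : Sig5) : mgate F1 x = F1 := by
  cases x <;> rfl

lemma mgate_F1_right (x : Sig5) : mgate x F1 = F1 := by
  cases x <;> rfl

lemma mgate_high {x y : Sig5} (hx : x = F1 ∨ x = one) (hy : y ≠ zero) :
    mgate x y = F1 ∨ mgate x y = one := by
  rcases hx with rfl | rfl <;> cases y <;> simp_all [mgate]

structure Summarizes (v : Sig5) (m c : ℕ) : Prop where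
  le : c ≤ m
  eq_zero_iff : v = zero ↔ c = 0
  eq_one_iff : v = one ↔ c = m
  high : m < 2 * c → v = F1 ∨ v = one

lemma Summarizes.mgate_high {v w : Sig5} {m c d : ℕ} (hv : v.Summarizes m c)
    (hw : w.Summarizes m d) (hc : m < 2 * c) (hcd : m < c + d) :
    mgate v w = F1 ∨ mgate v w = one :=
  Sig5.mgate_high (hv.high hc) fun hw0 => by have := hv.le; have := hw.eq_zero_iff.1 hw0; omega

lemma Summarizes.mgate {v w : Sig5} {m c d : ℕ} (hv : v.Summarizes m c)
    (hw : w.Summarizes m d) : (mgate v w).Summarizes (2 * m) (c + d) where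
  le := by have := hv.le; have := hw.le; omega
  eq_zero_iff := by rw [mgate_eq_zero_iff, hv.eq_zero_iff, hw.eq_zero_iff]; omega
  eq_one_iff := by
    have := hv.le; have := hw.le
    rw [mgate_eq_one_iff, hv.eq_one_iff, hw.eq_one_iff]; omega
  high hm := by
    rcases Nat.lt_or_ge m (2 * c) with hc | hd
    · exact hv.mgate_high hw hc (by omega)
    · rw [mgate_comm]
      exact hw.mgate_high hv (by omega) (by omega)

lemma Summarizes.eq_F1 {v : Sig5} {m c : ℕ} (hv : v.Summarizes m c) (hlo : m < 2 * c)
    (hhi : c < m) : v = F1 :=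
  (hv.high hlo).resolve_right fun h1 => by have := hv.eq_one_iff.1 h1; omega

end Sig5

lemma monEval_summarizes (h : ℕ) (a : ℕ → Bool) :
    (monEval h a).Summarizes (2 ^ h) (ones (2 ^ h) a) := by
  induction h generalizing a with
  | zero => cases ha : a 0 <;> constructor <;> simp [monEval, ones_one, ha]
  | succ h ih =>
    rw [monEval, pow_succ', two_mul, ones_add, ← two_mul]
    exact (ih a).mgate (ih _)

lemma monEval_eq_F1_of_block (k : ℕ) (a : ℕ → Bool) {h i : ℕ} (hi : i < 2 ^ h)
    (hF : monEval k (fun j => a (i * 2 ^ k + j)) = .F1) : monEval (h + k) a = .F1 := by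
  induction h generalizing a i with
  | zero => simpa [Nat.lt_one_iff.1 hi] using hF
  | succ h ih =>
    rw [Nat.add_right_comm, monEval]
    rcases Nat.lt_or_ge i (2 ^ h) with hlt | hge
    · rw [ih a hlt hF, Sig5.mgate_F1_left]
    · have hshift : (fun j => a ((i - 2 ^ h) * 2 ^ k + j + 2 ^ (h + k)))
          = fun j => a (i * 2 ^ k + j) := by
        funext j
        have : 2 ^ h * 2 ^ k ≤ i * 2 ^ k := Nat.mul_le_mul_right _ hge
        rw [pow_add, Nat.sub_mul]
        congr 1
        omega
      rw [ih (fun j => a (j + 2 ^ (h + k))) (i := i - 2 ^ h) (by rw [pow_succ] at hi; omega)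
        (by simpa only [hshift] using hF), Sig5.mgate_F1_right]

theorem monotone_subbalancing_reject_general (h k i : ℕ) (hkh : k ≤ h)
    (hi : i < 2 ^ (h - k)) (a : ℕ → Bool)
    (hlo : 2 ^ (k - 1) < ones (2 ^ k) (fun j => a (i * 2 ^ k + j)))
    (hhi : ones (2 ^ k) (fun j => a (i * 2 ^ k + j)) < 2 ^ k) :
    monEval h a = Sig5.F1 ∧ ¬ (monEval h a ≠ Sig5.F1 ∧ monEval h a ≠ Sig5.one) := by
  have hhalf : 2 ^ k ≤ 2 * 2 ^ (k - 1) := by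
    rw [← pow_succ']
    exact Nat.pow_le_pow_right two_pos (by omega)
  have hblock : monEval k (fun j => a (i * 2 ^ k + j)) = .F1 :=
    (monEval_summarizes k _).eq_F1 (by omega) hhi
  have hroot : monEval h a = .F1 := by
    simpa [Nat.sub_add_cancel hkh] using monEval_eq_F1_of_block k a hi hblock
  exact ⟨hroot, by simp [hroot]⟩

/-- if in some block of length `2^k` (`0 < k ≤ h`) the number
of `1`-values is strictly between `2^{k-1}` and `2^k`, then the root of the
monotone sub-balancing formula evaluates to `F₁`, hence the assignment is not
accepted (acceptance requires the root value to be neither `F₁` nor `1`). -/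
theorem monotone_subbalancing_reject (h k i : ℕ) (hk : 0 < k) (hkh : k ≤ h)
    (hi : i < 2 ^ (h - k)) (a : ℕ → Bool)
    (hlo : 2 ^ (k - 1) < ones (2 ^ k) (fun j => a (i * 2 ^ k + j)))
    (hhi : ones (2 ^ k) (fun j => a (i * 2 ^ k + j)) < 2 ^ k) :
    monEval h a = Sig5.F1 ∧ ¬ (monEval h a ≠ Sig5.F1 ∧ monEval h a ≠ Sig5.one) :=
  monotone_subbalancing_reject_general h k i hkh hi a hlo hhi
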